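/- arXiv:1412.3605 — 4 statements merged into one kernel-verified Lean document; each statement's English description precedes it below -/
import Mathlib

section
/- Let D ∈ ℚ^s and define the unloading sequence D_1 := ⌈D⌉ and D_{t+1} := the result of one unloading step applied to D_t. Then D_t ≤ D̃ for every t, the sequence is nondecreasing, and there exists t with D_t = D̃; that is, the unloading procedure reaches the antinef closure of D after finitely many steps. -/
open scoped BigOperators

/-! At an exceptional `i` with `E · E i > 0`, unloading adds the least multiple `n E i` with
`(E + n E i) · E i ≤ 0`. Since the other components meet `E i` nonnegatively, every antinef
`F ≥ E` already exceeds `E` by at least `n` at `i`, so unloading never overshoots the closure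
`D̃`. The sequence is therefore monotone in the finite box `[⌈D⌉, D̃]` of `ℤ^s`, so it stalls;
a fixed point of unloading is antinef, hence equal to `D̃` by minimality. -/

/-- Intersection `D · E i` of an integral divisor `D` with the `i`-th component. -/
def interZ {s : ℕ} (N : Matrix (Fin s) (Fin s) ℤ) (D : Fin s → ℤ) (i : Fin s) : ℤ :=
  ∑ j, D j * N j i

/-- An integral divisor is antinef if it intersects every exceptional component
nonpositively. -/
def Antinef {s : ℕ} (r : ℕ) (N : Matrix (Fin s) (Fin s) ℤ) (D : Fin s → ℤ) : Prop :=
  ∀ i : Fin s, (i : ℕ) < r → interZ N D i ≤ 0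

/-- `Dt` is the antinef closure of the rational divisor `D`: the least integral antinef
divisor lying entrywise above `D`. -/
def IsAntinefClosure {s : ℕ} (r : ℕ) (N : Matrix (Fin s) (Fin s) ℤ)
    (D : Fin s → ℚ) (Dt : Fin s → ℤ) : Prop :=
  Antinef r N Dt ∧ (∀ i, D i ≤ (Dt i : ℚ)) ∧
    ∀ D' : Fin s → ℤ, Antinef r N D' → (∀ i, D i ≤ (D' i : ℚ)) → ∀ i, Dt i ≤ D' i

/-- One unloading step: on every exceptional index with negative excess
(`0 < D · E i`), add `n i = ⌈(D·E i)/(-N i i)⌉` times `E i`. -/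
def unload {s : ℕ} (r : ℕ) (N : Matrix (Fin s) (Fin s) ℤ) (D : Fin s → ℤ) :
    Fin s → ℤ :=
  fun i =>
    if (i : ℕ) < r ∧ 0 < interZ N D i then
      D i + ⌈(interZ N D i : ℚ) / (-(N i i : ℚ))⌉
    else D i

theorem Monotone.exists_succ_eq_of_forall_le {α : Type*} [PartialOrder α]
    [LocallyFiniteOrder α] {f : ℕ → α} (hf : Monotone f) {b : α} (hb : ∀ t, f t ≤ b) :
    ∃ t, f (t + 1) = f t := by
  obtain ⟨m, n, hmn, hfmn⟩ := (Set.finite_Icc (f 0) b).exists_lt_map_eq_of_forall_mem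
    (f := f) fun t => Set.mem_Icc.mpr ⟨hf (Nat.zero_le t), hb t⟩
  exact ⟨m, le_antisymm (hfmn ▸ hf (Nat.succ_le_of_lt hmn)) (hf (Nat.le_succ m))⟩

section Unloading

variable {s r : ℕ} {N : Matrix (Fin s) (Fin s) ℤ}

theorem diag_neg_of_negDefinite
    (hneg : ∀ x : Fin s → ℚ, (∀ i : Fin s, r ≤ (i : ℕ) → x i = 0) → x ≠ 0 →
      (∑ i, ∑ j, x i * x j * (N i j : ℚ)) < 0)
    {i : Fin s} (hi : (i : ℕ) < r) : N i i < 0 := by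
  have hsupp : ∀ j : Fin s, r ≤ (j : ℕ) → (Pi.single i 1 : Fin s → ℚ) j = 0 :=
    fun j hj => Pi.single_eq_of_ne (by rintro rfl; omega) _
  have h := hneg (Pi.single i 1) hsupp (by simp)
  simpa [Pi.single_apply] using h

theorem interZ_sub_interZ (A B : Fin s → ℤ) (i : Fin s) :
    interZ N A i - interZ N B i = ∑ j, (A j - B j) * N j i := by
  simp only [interZ, ← Finset.sum_sub_distrib, sub_mul]

theorem interZ_le_of_le_antinef (hoff : ∀ i j : Fin s, i ≠ j → 0 ≤ N i j)
    {E F : Fin s → ℤ} (hEF : E ≤ F) (hF : Antinef r N F) {i : Fin s} (hi : (i : ℕ) < r) :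
    interZ N E i ≤ (F i - E i) * -N i i := by
  have hself_le : (F i - E i) * N i i ≤ ∑ j, (F j - E j) * N j i := by
    rw [← Finset.add_sum_erase _ _ (Finset.mem_univ i), le_add_iff_nonneg_right]
    exact Finset.sum_nonneg fun j hj =>
      mul_nonneg (sub_nonneg.mpr (hEF j)) (hoff j i (Finset.ne_of_mem_erase hj))
  linarith [hF i hi, interZ_sub_interZ (N := N) F E i]

variable (hdiag : ∀ i : Fin s, (i : ℕ) < r → N i i < 0)
include hdiag

theorem lt_unload_apply {E : Fin s → ℤ} {i : Fin s} (hi : (i : ℕ) < r)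
    (hpos : 0 < interZ N E i) : E i < unload r N E i := by
  have hN : (N i i : ℚ) < 0 := by exact_mod_cast hdiag i hi
  have : 0 < ⌈(interZ N E i : ℚ) / (-(N i i : ℚ))⌉ :=
    Int.ceil_pos.mpr (div_pos (by exact_mod_cast hpos) (by linarith))
  simp only [unload, hi, hpos, and_self, if_true]
  omega

theorem le_unload (E : Fin s → ℤ) : E ≤ unload r N E := fun i => by
  by_cases h : (i : ℕ) < r ∧ 0 < interZ N E i
  · exact (lt_unload_apply hdiag h.1 h.2).le
  · simp only [unload, h, if_false, le_refl]

theorem unload_eq_self_iff {E : Fin s → ℤ} : unload r N E = E ↔ Antinef r N E := by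
  refine ⟨fun h i hi => not_lt.mp fun hpos => ?_, fun h => funext fun i => ?_⟩
  · exact (lt_unload_apply hdiag hi hpos).ne' (congrFun h i)
  · simp only [unload, ite_eq_right_iff, add_eq_left, and_imp]
    exact fun hi hpos => absurd (h i hi) (not_le.mpr hpos)

theorem unload_le_of_le_antinef (hoff : ∀ i j : Fin s, i ≠ j → 0 ≤ N i j)
    {E F : Fin s → ℤ} (hEF : E ≤ F) (hF : Antinef r N F) : unload r N E ≤ F := fun i => by
  by_cases h : (i : ℕ) < r ∧ 0 < interZ N E i
  · have hN : (0 : ℚ) < -(N i i : ℚ) := by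
      have : (N i i : ℚ) < 0 := by exact_mod_cast hdiag i h.1
      linarith
    have hdiv : (interZ N E i : ℚ) / (-(N i i : ℚ)) ≤ ((F i - E i : ℤ) : ℚ) := by
      rw [div_le_iff₀ hN]
      exact_mod_cast interZ_le_of_le_antinef hoff hEF hF h.1
    have := Int.ceil_le.mpr hdiv
    simp only [unload, h, and_self, if_true]
    omega
  · simp only [unload, h, if_false]
    exact hEF i

end Unloading

theorem unload_sequence_reaches_closure_general
    (s r : ℕ)
    (N : Matrix (Fin s) (Fin s) ℤ)
    (hoff : ∀ i j : Fin s, i ≠ j → 0 ≤ N i j)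
    (hneg : ∀ x : Fin s → ℚ, (∀ i : Fin s, r ≤ (i : ℕ) → x i = 0) → x ≠ 0 →
      (∑ i, ∑ j, x i * x j * (N i j : ℚ)) < 0)
    (D : Fin s → ℚ) (Dt : Fin s → ℤ)
    (hDt : IsAntinefClosure r N D Dt)
    (seq : ℕ → Fin s → ℤ)
    (hseq0 : seq 0 = fun i => ⌈D i⌉)
    (hseqS : ∀ t, seq (t + 1) = unload r N (seq t)) :
    (∀ t, seq t ≤ Dt) ∧ (∀ t, seq t ≤ seq (t + 1)) ∧ ∃ t, seq t = Dt := by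
  obtain ⟨hanti, hge, hmin⟩ := hDt
  have hdiag : ∀ i : Fin s, (i : ℕ) < r → N i i < 0 := fun i => diag_neg_of_negDefinite hneg
  have hle : ∀ t, seq t ≤ Dt := by
    intro t
    induction t with
    | zero => exact hseq0 ▸ fun i => Int.ceil_le.mpr (hge i)
    | succ t ih => exact hseqS t ▸ unload_le_of_le_antinef hdiag hoff ih hanti
  have hmono : ∀ t, seq t ≤ seq (t + 1) := fun t => hseqS t ▸ le_unload hdiag (seq t)
  have hmon : Monotone seq := monotone_nat_of_le_succ hmono
  obtain ⟨t, ht⟩ := hmon.exists_succ_eq_of_forall_le hle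
  have hfix : Antinef r N (seq t) := (unload_eq_self_iff hdiag).mp (hseqS t ▸ ht)
  have habove : ∀ i, D i ≤ (seq t i : ℚ) := fun i => Int.ceil_le.mp <| by
    simpa [hseq0] using hmon (Nat.zero_le t) i
  exact ⟨hle, hmono, t, le_antisymm (hle t) (hmin _ hfix habove)⟩

/-- The unloading sequence `D₁ = ⌈D⌉`, `D_{t+1} = unload D_t` is
nondecreasing, bounded above by the antinef closure `D̃` of `D`, and reaches `D̃`
after finitely many steps. -/
theorem unload_sequence_reaches_closure
    (s r : ℕ) (hr : 1 ≤ r) (hrs : r ≤ s)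
    (N : Matrix (Fin s) (Fin s) ℤ)
    (hsym : ∀ i j, N i j = N j i)
    (hoff : ∀ i j : Fin s, i ≠ j → 0 ≤ N i j)
    (hneg : ∀ x : Fin s → ℚ, (∀ i : Fin s, r ≤ (i : ℕ) → x i = 0) → x ≠ 0 →
      (∑ i, ∑ j, x i * x j * (N i j : ℚ)) < 0)
    (D : Fin s → ℚ) (Dt : Fin s → ℤ)
    (hDt : IsAntinefClosure r N D Dt)
    (seq : ℕ → Fin s → ℤ)
    (hseq0 : seq 0 = fun i => ⌈D i⌉)
    (hseqS : ∀ t, seq (t + 1) = unload r N (seq t)) :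
    (∀ t, seq t ≤ Dt) ∧ (∀ t, seq t ≤ seq (t + 1)) ∧ ∃ t, seq t = Dt :=
  unload_sequence_reaches_closure_general s r N hoff hneg D Dt hDt seq hseq0 hseqS
end

section
/- Let 0 < λ' < λ be rational numbers and write e_i^{λ'} := v_i(D_{λ'}). Then: (i) D_{λ'} = D_λ if and only if ⌊λ·e_i − k_i⌋ ≤ e_i^{λ'} for every index i; (ii) D_{λ'} < D_λ (meaning D_{λ'} ≤ D_λ and D_{λ'} ≠ D_λ) if and only if ⌊λ·e_i − k_i⌋ > e_i^{λ'} for some index i. (Under Lipman's correspondence these are the conditions 𝒥(𝔞^{λ'}) = 𝒥(𝔞^λ) and 𝒥(𝔞^{λ'}) ⊋ 𝒥(𝔞^λ), respectively.) -/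
open scoped BigOperators

/-!
Since `F ≥ 0`, the divisor `⌊λ'F − K⌋` lies below `⌊λF − K⌋`, so minimality of the antinef
closure gives `D_{λ'} ≤ D_λ`. As `D_λ` is the least antinef divisor above `⌊λF − K⌋`, equality
holds exactly when `D_{λ'}` already lies above `⌊λF − K⌋`.
-/

namespace IsAntinefClosure

variable {s r : ℕ} {N : Matrix (Fin s) (Fin s) ℤ} {D D' : Fin s → ℚ} {Dt Dt' : Fin s → ℤ}

theorem mono (h : IsAntinefClosure r N D Dt) (h' : IsAntinefClosure r N D' Dt') (hDD' : D ≤ D') :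
    Dt ≤ Dt' :=
  h.2.2 Dt' h'.1 fun i => (hDD' i).trans (h'.2.1 i)

theorem eq_iff_le (h : IsAntinefClosure r N D Dt) (h' : IsAntinefClosure r N D' Dt')
    (hDD' : D ≤ D') : Dt = Dt' ↔ ∀ i, D' i ≤ Dt i := by
  constructor
  · rintro rfl
    exact h'.2.1
  · intro hle
    exact le_antisymm (h.mono h' hDD') (h'.2.2 Dt h.1 hle)

theorem lt_iff_exists_lt (h : IsAntinefClosure r N D Dt) (h' : IsAntinefClosure r N D' Dt')
    (hDD' : D ≤ D') : Dt < Dt' ↔ ∃ i, Dt i < D' i := by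
  simp only [lt_iff_le_and_ne, h.mono h' hDD', true_and, Ne, h.eq_iff_le h' hDD', not_forall,
    not_le]

end IsAntinefClosure

theorem floor_mul_sub_mono {s : ℕ} {F : Fin s → ℤ} (hF : ∀ i, 0 ≤ F i) (K : Fin s → ℚ)
    {lam' lam : ℚ} (hll : lam' ≤ lam) :
    (fun i => (⌊lam' * (F i : ℚ) - K i⌋ : ℚ)) ≤ fun i => (⌊lam * (F i : ℚ) - K i⌋ : ℚ) :=
  fun i => by
    have hFi : (0 : ℚ) ≤ F i := by exact_mod_cast hF i
    exact Int.cast_le.mpr (Int.floor_mono (by gcongr))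

theorem multiplier_ideal_jump_criterion_general
    (s r : ℕ)
    (N : Matrix (Fin s) (Fin s) ℤ)
    (F : Fin s → ℤ) (hF1 : ∀ i, 1 ≤ F i)
    (K : Fin s → ℚ)
    (lam' lam : ℚ) (hll : lam' < lam)
    (Dl' Dl : Fin s → ℤ)
    (hDl' : IsAntinefClosure r N (fun i => (⌊lam' * (F i : ℚ) - K i⌋ : ℚ)) Dl')
    (hDl : IsAntinefClosure r N (fun i => (⌊lam * (F i : ℚ) - K i⌋ : ℚ)) Dl) :
    (Dl' = Dl ↔ ∀ i, ⌊lam * (F i : ℚ) - K i⌋ ≤ Dl' i) ∧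
      ((Dl' ≤ Dl ∧ Dl' ≠ Dl) ↔ ∃ i, Dl' i < ⌊lam * (F i : ℚ) - K i⌋) := by
  have hmono := floor_mul_sub_mono (fun i => zero_le_one.trans (hF1 i)) K hll.le
  refine ⟨?_, ?_⟩
  · rw [hDl'.eq_iff_le hDl hmono]
    exact_mod_cast Iff.rfl
  · rw [← lt_iff_le_and_ne, hDl'.lt_iff_exists_lt hDl hmono]
    exact_mod_cast Iff.rfl

/-- For rationals `0 < λ' < λ`, with `D_λ` the antinef closure of
`⌊λF − K⌋`:  (i) `D_{λ'} = D_λ` iff `⌊λe_i − k_i⌋ ≤ e_i^{λ'}` for all `i`;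
(ii) `D_{λ'} < D_λ` iff `⌊λe_i − k_i⌋ > e_i^{λ'}` for some `i`. -/
theorem multiplier_ideal_jump_criterion
    (s r : ℕ) (hr : 1 ≤ r) (hrs : r ≤ s)
    (N : Matrix (Fin s) (Fin s) ℤ)
    (hsym : ∀ i j, N i j = N j i)
    (hoff : ∀ i j : Fin s, i ≠ j → 0 ≤ N i j)
    (hneg : ∀ x : Fin s → ℚ, (∀ i : Fin s, r ≤ (i : ℕ) → x i = 0) → x ≠ 0 →
      (∑ i, ∑ j, x i * x j * (N i j : ℚ)) < 0)
    (F : Fin s → ℤ) (hF1 : ∀ i, 1 ≤ F i) (hFanti : Antinef r N F)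
    (K : Fin s → ℚ) (hKaff : ∀ i : Fin s, r ≤ (i : ℕ) → K i = 0)
    (hKexc : ∀ i : Fin s, (i : ℕ) < r →
      (∑ j, K j * (N j i : ℚ)) + (N i i : ℚ) = -2)
    (lam' lam : ℚ) (hl0 : 0 < lam') (hll : lam' < lam)
    (Dl' Dl : Fin s → ℤ)
    (hDl' : IsAntinefClosure r N (fun i => (⌊lam' * (F i : ℚ) - K i⌋ : ℚ)) Dl')
    (hDl : IsAntinefClosure r N (fun i => (⌊lam * (F i : ℚ) - K i⌋ : ℚ)) Dl) :
    (Dl' = Dl ↔ ∀ i, ⌊lam * (F i : ℚ) - K i⌋ ≤ Dl' i) ∧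
      ((Dl' ≤ Dl ∧ Dl' ≠ Dl) ↔ ∃ i, Dl' i < ⌊lam * (F i : ℚ) - K i⌋) :=
  multiplier_ideal_jump_criterion_general s r N F hF1 K lam' lam hll Dl' Dl hDl' hDl
end

section
/- Let 0 ≤ λ' < λ be consecutive jumping values. Then the antinef closure of ⌊λF − K⌋ − G_λ equals D_{λ'}; that is, the minimal jumping divisor G_λ is a jumping divisor for λ. -/
open scoped BigOperators

/-!
For `c` slightly below `λ` one has `⌊c F − K⌋ = ⌈λ F − K⌉ − 1` entrywise, so `D_{λ'}` is the
antinef closure of `⌈λ F − K⌉ − 1`. Entrywise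
`⌈λ F − K⌉ − 1 ≤ ⌊λ F − K⌋ − G_λ ≤ D_{λ'}`: the first inequality because `G_λ` is supported
where `λ F − K` is an integer; the second because `⌈λ F − K⌉ ≤ D_{λ'} + 1`, and off the support
of `G_λ` this inequality is strict at integral entries. A divisor squeezed between a divisor and
its antinef closure has the same antinef closure.
-/
open Filter Topology Set

section Floor

variable {α : Type*} [Ring α] [LinearOrder α] [IsStrictOrderedRing α] [FloorRing α]

theorem Int.ceil_sub_one_le_floor_sub_ite (x : α) (d : ℤ) :
    ⌈x⌉ - 1 ≤ ⌊x⌋ - if x = d + 1 then 1 else 0 := by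
  split_ifs with hx
  · have : x = ((d + 1 : ℤ) : α) := by push_cast; exact hx
    simp [this]
  · linarith [Int.ceil_le_floor_add_one x]

theorem Int.floor_sub_ite_le_of_ceil_sub_one_le {x : α} {d : ℤ} (h : ⌈x⌉ - 1 ≤ d) :
    ⌊x⌋ - (if x = d + 1 then 1 else 0) ≤ d := by
  split_ifs with hx
  · have : x = ((d + 1 : ℤ) : α) := by push_cast; exact hx
    simp [this]
  · have hle : x ≤ d + 1 := by exact_mod_cast Int.ceil_le.1 (by omega : ⌈x⌉ ≤ d + 1)
    simpa using Int.floor_le_iff.2 (lt_of_le_of_ne hle hx)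

end Floor

section FloorNearLeft

variable {α : Type*} [Field α] [LinearOrder α] [IsStrictOrderedRing α]
  [TopologicalSpace α] [OrderTopology α]

theorem Int.eventually_floor_eq_ceil_sub_one [FloorRing α] (y : α) :
    ∀ᶠ t in 𝓝[<] y, ⌊t⌋ = ⌈y⌉ - 1 := by
  have hlt : ((⌈y⌉ - 1 : ℤ) : α) < y := by
    push_cast
    linarith [Int.ceil_lt_add_one y]
  filter_upwards [Ioo_mem_nhdsLT hlt] with t ⟨hlo, hhi⟩
  rw [Int.floor_eq_iff]
  push_cast at hlo ⊢
  exact ⟨hlo.le, hhi.trans_le (Int.le_ceil y) |>.trans_le (by linarith)⟩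

theorem tendsto_mul_sub_nhdsLT {a : α} (ha : 0 < a) (b t : α) :
    Tendsto (fun c => c * a - b) (𝓝[<] t) (𝓝[<] (t * a - b)) := by
  refine tendsto_nhdsWithin_iff.2 ⟨?_, ?_⟩
  · exact ((continuous_id.mul continuous_const).sub continuous_const).tendsto t
      |>.mono_left nhdsWithin_le_nhds
  · filter_upwards [self_mem_nhdsWithin] with c (hc : c < t)
    exact sub_lt_sub_right (mul_lt_mul_of_pos_right hc ha) b

theorem exists_mem_Ico_floor_mul_sub_eq_ceil_sub_one [FloorRing α] {ι : Type*} [Finite ι]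
    {a b : α} (hab : a < b) {F K : ι → α} (hF : ∀ i, 0 < F i) :
    ∃ c ∈ Ico a b, ∀ i, ⌊c * F i - K i⌋ = ⌈b * F i - K i⌉ - 1 := by
  have hfloor : ∀ᶠ c in 𝓝[<] b, ∀ i, ⌊c * F i - K i⌋ = ⌈b * F i - K i⌉ - 1 :=
    eventually_all.2 fun i =>
      (tendsto_mul_sub_nhdsLT (hF i) (K i) b).eventually (Int.eventually_floor_eq_ceil_sub_one _)
  exact ((eventually_mem_set.2 (Ico_mem_nhdsLT hab)).and hfloor).exists

end FloorNearLeft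

theorem IsAntinefClosure.of_le_of_le {s r : ℕ} {N : Matrix (Fin s) (Fin s) ℤ}
    {D D₁ : Fin s → ℚ} {Dt : Fin s → ℤ} (h : IsAntinefClosure r N D Dt)
    (hD : ∀ i, D i ≤ D₁ i) (hDt : ∀ i, D₁ i ≤ Dt i) : IsAntinefClosure r N D₁ Dt :=
  ⟨h.1, hDt, fun D' hD' hle => h.2.2 D' hD' fun i => (hD i).trans (hle i)⟩

theorem minimal_jumping_divisor_is_jumping_general
    (s r : ℕ)
    (N : Matrix (Fin s) (Fin s) ℤ)
    (F : Fin s → ℤ) (hF1 : ∀ i, 1 ≤ F i)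
    (K : Fin s → ℚ)
    (lam' lam : ℚ) (hll : lam' < lam)
    (Dl' : Fin s → ℤ)
    (hconsec : ∀ c : ℚ, lam' ≤ c → c < lam →
      IsAntinefClosure r N (fun i => (⌊c * (F i : ℚ) - K i⌋ : ℚ)) Dl')
    (Gl : Fin s → ℤ)
    (hGl : ∀ i, Gl i = if lam * (F i : ℚ) = K i + 1 + (Dl' i : ℚ) then 1 else 0)
    :
    IsAntinefClosure r N (fun i => ((⌊lam * (F i : ℚ) - K i⌋ - Gl i : ℤ) : ℚ)) Dl' := by
  have hFpos : ∀ i, (0 : ℚ) < F i := fun i => by exact_mod_cast (hF1 i)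
  obtain ⟨c, ⟨hc₁, hc₂⟩, hfloor⟩ := exists_mem_Ico_floor_mul_sub_eq_ceil_sub_one hll hFpos (K := K)
  have hG : ∀ i, Gl i = if lam * F i - K i = (Dl' i : ℚ) + 1 then 1 else 0 := fun i => by
    rw [hGl i]
    congr 1
    exact propext ⟨fun h => by linarith, fun h => by linarith⟩
  have hclosure := hconsec c hc₁ hc₂
  simp only [hfloor] at hclosure
  refine hclosure.of_le_of_le (fun i => ?_) (fun i => ?_)
  · exact_mod_cast hG i ▸ Int.ceil_sub_one_le_floor_sub_ite _ _
  · have hceil : ⌈lam * F i - K i⌉ - 1 ≤ Dl' i := Int.cast_le.1 (hclosure.2.1 i)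
    exact_mod_cast hG i ▸ Int.floor_sub_ite_le_of_ceil_sub_one_le hceil

/-- For consecutive jumping values `0 ≤ λ' < λ`, the minimal jumping
divisor `G_λ` is a jumping divisor for `λ`: the antinef closure of `⌊λF − K⌋ − G_λ`
equals `D_{λ'}`. -/
theorem minimal_jumping_divisor_is_jumping
    (s r : ℕ) (hr : 1 ≤ r) (hrs : r ≤ s)
    (N : Matrix (Fin s) (Fin s) ℤ)
    (hsym : ∀ i j, N i j = N j i)
    (hoff : ∀ i j : Fin s, i ≠ j → 0 ≤ N i j)
    (hneg : ∀ x : Fin s → ℚ, (∀ i : Fin s, r ≤ (i : ℕ) → x i = 0) → x ≠ 0 →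
      (∑ i, ∑ j, x i * x j * (N i j : ℚ)) < 0)
    (F : Fin s → ℤ) (hF1 : ∀ i, 1 ≤ F i) (hFanti : Antinef r N F)
    (K : Fin s → ℚ) (hKaff : ∀ i : Fin s, r ≤ (i : ℕ) → K i = 0)
    (hKexc : ∀ i : Fin s, (i : ℕ) < r →
      (∑ j, K j * (N j i : ℚ)) + (N i i : ℚ) = -2)
    (lam' lam : ℚ) (hl0 : 0 ≤ lam') (hll : lam' < lam)
    (Dl' : Fin s → ℤ)
    (hconsec : ∀ c : ℚ, lam' ≤ c → c < lam →
      IsAntinefClosure r N (fun i => (⌊c * (F i : ℚ) - K i⌋ : ℚ)) Dl')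
    (Dl : Fin s → ℤ)
    (hDl : IsAntinefClosure r N (fun i => (⌊lam * (F i : ℚ) - K i⌋ : ℚ)) Dl)
    (hjump : Dl ≠ Dl')
    (Gl : Fin s → ℤ)
    (hGl : ∀ i, Gl i = if lam * (F i : ℚ) = K i + 1 + (Dl' i : ℚ) then 1 else 0)
    :
    IsAntinefClosure r N (fun i => ((⌊lam * (F i : ℚ) - K i⌋ - Gl i : ℤ) : ℚ)) Dl' :=
  minimal_jumping_divisor_is_jumping_general s r N F hF1 K lam' lam hll Dl' hconsec Gl hGl
end

section
/- Let 0 ≤ λ' < λ be consecutive jumping values and let G be a reduced (0/1-valued) divisor such that λ·e_i − k_i is a positive integer for every i ∈ supp G and such that the antinef closure C of ⌊λF − K⌋ − G is different from D_λ. Then C = D_{λ'} if and only if G_λ ≤ G; moreover, if G_λ ≰ G then D_{λ'} < C < D_λ (where D' < D'' means D' ≤ D'' entrywise and D' ≠ D''). -/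
open scoped BigOperators

/-!
On `[λ', λ)` the closure `D_{λ'}` dominates `⌊cF − K⌋` for every `c`, hence (letting `c → λ`)
it dominates `⌈λF − K⌉ − 1`, which differs from `⌊λF − K⌋` exactly at the components where
`λF − K` is an integer. On such a component `D_{λ'}` still reaches `⌊λF − K⌋` unless
`λe_i = k_i + 1 + e_i^{λ'}`, i.e. unless `i ∈ supp G_λ`. So `⌊λF − K⌋ − G ≤ D_{λ'}` as soon as
`G_λ ≤ G`, and minimality of antinef closures gives `C = D_{λ'}`. Conversely `C = D_{λ'}` forces
`G` to cover `G_λ`, and `D_{λ'} ≤ C ≤ D_λ` holds for every candidate `G` by monotonicity of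
the closure, because `⌊λ'F − K⌋ ≤ ⌊λF − K⌋ − G`.
-/

namespace IsAntinefClosure

variable {s r : ℕ} {N : Matrix (Fin s) (Fin s) ℤ} {D E : Fin s → ℚ} {Dt Et : Fin s → ℤ}

theorem le_of_antinef (hD : IsAntinefClosure r N D Dt) (hE : Antinef r N Et)
    (hle : ∀ i, D i ≤ (Et i : ℚ)) : Dt ≤ Et :=
  hD.2.2 Et hE hle

theorem mono_s9 (hD : IsAntinefClosure r N D Dt) (hE : IsAntinefClosure r N E Et)
    (hle : ∀ i, D i ≤ E i) : Dt ≤ Et :=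
  hD.le_of_antinef hE.1 fun i => (hle i).trans (hE.2.1 i)

end IsAntinefClosure

section FloorRing

variable {α : Type*} [Field α] [LinearOrder α] [IsStrictOrderedRing α]

theorem exists_mem_Ico_le_mul_sub {a b f k z : α} (hab : a < b) (hf : 0 < f)
    (hz : z < b * f - k) : ∃ c, a ≤ c ∧ c < b ∧ z ≤ c * f - k := by
  refine ⟨max a ((z + k) / f), le_max_left _ _, max_lt hab ?_, ?_⟩
  · rw [div_lt_iff₀ hf]
    linarith
  · have h := le_max_right a ((z + k) / f)
    rw [div_le_iff₀ hf] at h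
    linarith

variable [FloorRing α]

theorem Int.floor_sub_le_of_ceil_sub_one_le {x : α} {d g : ℤ} (hd : ⌈x⌉ - 1 ≤ d)
    (hg : 0 ≤ g) (hx : x = d + 1 → 1 ≤ g) : ⌊x⌋ - g ≤ d := by
  by_contra! h
  have hceil : ⌈x⌉ ≤ d + 1 := by omega
  have hx_le : x ≤ d + 1 := by exact_mod_cast Int.ceil_le.mp hceil
  have hle_x : (d : α) + 1 ≤ x := by exact_mod_cast Int.le_floor.mp (show d + 1 ≤ ⌊x⌋ by omega)
  have := hx (le_antisymm hx_le hle_x)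
  have := Int.floor_le_ceil x
  omega

theorem Int.one_le_of_floor_sub_le {x : α} {d g : ℤ} (hx : x = d + 1) (h : ⌊x⌋ - g ≤ d) :
    1 ≤ g := by
  rw [hx, show (d : α) + 1 = ((d + 1 : ℤ) : α) by push_cast; ring, Int.floor_intCast] at h
  omega

theorem Int.floor_le_floor_sub {x y : α} {g : ℤ} (hyx : y < x) (hg : g = 0 ∨ g = 1)
    (hint : g = 1 → ∃ m : ℤ, x = m) : ⌊y⌋ ≤ ⌊x⌋ - g := by
  rcases hg with rfl | rfl
  · simpa using Int.floor_le_floor hyx.le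
  · obtain ⟨m, rfl⟩ := hint rfl
    have := Int.floor_lt.mpr hyx
    rw [Int.floor_intCast]
    omega

end FloorRing

/-- `⌊cF − K⌋` already reaches `⌈λF − K⌉ − 1` for `c < λ` close enough to `λ`. -/
theorem ceil_sub_one_le_of_isAntinefClosure_Ico {s r : ℕ} {N : Matrix (Fin s) (Fin s) ℤ}
    {F : Fin s → ℤ} {K : Fin s → ℚ} {lam' lam : ℚ} {Dl' : Fin s → ℤ} (hll : lam' < lam)
    (hconsec : ∀ c : ℚ, lam' ≤ c → c < lam →
      IsAntinefClosure r N (fun i => (⌊c * (F i : ℚ) - K i⌋ : ℚ)) Dl')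
    {i : Fin s} (hF : 0 < F i) : ⌈lam * (F i : ℚ) - K i⌉ - 1 ≤ Dl' i := by
  have hlt : ((⌈lam * (F i : ℚ) - K i⌉ - 1 : ℤ) : ℚ) < lam * F i - K i := by
    push_cast
    linarith [Int.ceil_lt_add_one (lam * (F i : ℚ) - K i)]
  obtain ⟨c, hc', hc, hle⟩ := exists_mem_Ico_le_mul_sub hll (by exact_mod_cast hF) hlt
  have hfloor : ((⌊c * (F i : ℚ) - K i⌋ : ℤ) : ℚ) ≤ Dl' i := (hconsec c hc' hc).2.1 i
  exact (Int.le_floor.mpr hle).trans (by exact_mod_cast hfloor)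

theorem contributing_divisor_dichotomy_general
    (s r : ℕ)
    (N : Matrix (Fin s) (Fin s) ℤ)
    (F : Fin s → ℤ) (hF1 : ∀ i, 1 ≤ F i)
    (K : Fin s → ℚ)
    (lam' lam : ℚ) (hll : lam' < lam)
    (Dl' : Fin s → ℤ)
    (hconsec : ∀ c : ℚ, lam' ≤ c → c < lam →
      IsAntinefClosure r N (fun i => (⌊c * (F i : ℚ) - K i⌋ : ℚ)) Dl')
    (Dl : Fin s → ℤ)
    (hDl : IsAntinefClosure r N (fun i => (⌊lam * (F i : ℚ) - K i⌋ : ℚ)) Dl)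
    (Gl : Fin s → ℤ)
    (hGl : ∀ i, Gl i = if lam * (F i : ℚ) = K i + 1 + (Dl' i : ℚ) then 1 else 0)
    (G : Fin s → ℤ) (hGred : ∀ i, G i = 0 ∨ G i = 1)
    (hGcand : ∀ i, G i = 1 → ∃ m : ℤ, 0 < m ∧ lam * (F i : ℚ) - K i = (m : ℚ))
    (C : Fin s → ℤ)
    (hC : IsAntinefClosure r N (fun i => ((⌊lam * (F i : ℚ) - K i⌋ - G i : ℤ) : ℚ)) C)
    (hCne : C ≠ Dl) :
    (C = Dl' ↔ Gl ≤ G) ∧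
      (¬ Gl ≤ G → (Dl' ≤ C ∧ Dl' ≠ C) ∧ (C ≤ Dl ∧ C ≠ Dl)) := by
  have hG0 : ∀ i, 0 ≤ G i := fun i => by rcases hGred i with h | h <;> omega
  have hDl'C : Dl' ≤ C := (hconsec lam' le_rfl hll).mono_s9 hC fun i => by
    have hFi : (0 : ℚ) < F i := by exact_mod_cast hF1 i
    have hlt : lam' * (F i : ℚ) - K i < lam * F i - K i := by
      linarith [mul_lt_mul_of_pos_right hll hFi]
    exact_mod_cast Int.floor_le_floor_sub hlt (hGred i) fun h =>
      (hGcand i h).imp fun _ hm => hm.2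
  have hCDl : C ≤ Dl := hC.mono_s9 hDl fun i => by
    have : (0 : ℚ) ≤ G i := by exact_mod_cast hG0 i
    push_cast
    linarith
  have fwd : C = Dl' → Gl ≤ G := by
    rintro rfl i
    rw [hGl i]
    split_ifs with h
    · have hle : ((⌊lam * (F i : ℚ) - K i⌋ - G i : ℤ) : ℚ) ≤ C i := hC.2.1 i
      exact Int.one_le_of_floor_sub_le (x := lam * (F i : ℚ) - K i) (d := C i) (by linarith)
        (by exact_mod_cast hle)
    · exact hG0 i
  have bwd : Gl ≤ G → C = Dl' := fun hle => le_antisymm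
    (hC.le_of_antinef (hconsec lam' le_rfl hll).1 fun i => by
      have hceil :=
        ceil_sub_one_le_of_isAntinefClosure_Ico hll hconsec (i := i) (by linarith [hF1 i])
      refine mod_cast Int.floor_sub_le_of_ceil_sub_one_le hceil (hG0 i) fun hx => ?_
      simpa [hGl i, show lam * (F i : ℚ) = K i + 1 + Dl' i by linarith] using hle i)
    hDl'C
  exact ⟨⟨fwd, bwd⟩, fun hnle =>
    ⟨⟨hDl'C, fun h => hnle (fwd h.symm)⟩, ⟨hCDl, hCne⟩⟩⟩

/-- **Theorem `jump1`.** Let `G` be a contributing divisor associated to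
the jumping number `λ` (a reduced candidate divisor whose associated antinef closure
`C` of `⌊λF − K⌋ − G` differs from `D_λ`).  Then `C = D_{λ'}` iff `G_λ ≤ G`; and
otherwise `D_{λ'} < C < D_λ`. -/
theorem contributing_divisor_dichotomy
    (s r : ℕ) (hr : 1 ≤ r) (hrs : r ≤ s)
    (N : Matrix (Fin s) (Fin s) ℤ)
    (hsym : ∀ i j, N i j = N j i)
    (hoff : ∀ i j : Fin s, i ≠ j → 0 ≤ N i j)
    (hneg : ∀ x : Fin s → ℚ, (∀ i : Fin s, r ≤ (i : ℕ) → x i = 0) → x ≠ 0 →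
      (∑ i, ∑ j, x i * x j * (N i j : ℚ)) < 0)
    (F : Fin s → ℤ) (hF1 : ∀ i, 1 ≤ F i) (hFanti : Antinef r N F)
    (K : Fin s → ℚ) (hKaff : ∀ i : Fin s, r ≤ (i : ℕ) → K i = 0)
    (hKexc : ∀ i : Fin s, (i : ℕ) < r →
      (∑ j, K j * (N j i : ℚ)) + (N i i : ℚ) = -2)
    (lam' lam : ℚ) (hl0 : 0 ≤ lam') (hll : lam' < lam)
    (Dl' : Fin s → ℤ)
    (hconsec : ∀ c : ℚ, lam' ≤ c → c < lam →
      IsAntinefClosure r N (fun i => (⌊c * (F i : ℚ) - K i⌋ : ℚ)) Dl')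
    (Dl : Fin s → ℤ)
    (hDl : IsAntinefClosure r N (fun i => (⌊lam * (F i : ℚ) - K i⌋ : ℚ)) Dl)
    (hjump : Dl ≠ Dl')
    (Gl : Fin s → ℤ)
    (hGl : ∀ i, Gl i = if lam * (F i : ℚ) = K i + 1 + (Dl' i : ℚ) then 1 else 0)
    (G : Fin s → ℤ) (hGred : ∀ i, G i = 0 ∨ G i = 1)
    (hGcand : ∀ i, G i = 1 → ∃ m : ℤ, 0 < m ∧ lam * (F i : ℚ) - K i = (m : ℚ))
    (C : Fin s → ℤ)
    (hC : IsAntinefClosure r N (fun i => ((⌊lam * (F i : ℚ) - K i⌋ - G i : ℤ) : ℚ)) C)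
    (hCne : C ≠ Dl) :
    (C = Dl' ↔ Gl ≤ G) ∧
      (¬ Gl ≤ G → (Dl' ≤ C ∧ Dl' ≠ C) ∧ (C ≤ Dl ∧ C ≠ Dl)) :=
  contributing_divisor_dichotomy_general s r N F hF1 K lam' lam hll Dl' hconsec Dl hDl Gl hGl G
    hGred hGcand C hC hCne
end
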